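/- There is no vector w = (w₁,w₂,w₃,w₄,w₅,w₆) ∈ ℝ⁶ that simultaneously satisfies: w₁ = 0, w₆ = 0, 4((2−√2)w₂ + (−2+2√2)w₃ + (2−√2)w₅) = π, w₂ − w₅ = 0, (−5+2√2)w₂ + (4−4√2)w₃ + (3−2√2)w₄ + (−7+6√2)w₅ = 0, c₆(w) = 0, and c₇(w) = 0. -/
import Mathlib


noncomputable section

/-- The linear form `c₆` of the paper, a coefficient of the second-order bias term. -/
def c6 (w : Fin 6 → ℝ) : ℝ :=
  (1 / 6) * (w 0 + (2 * Real.sqrt 2 - 2) * w 1 + (2 - 4 * Real.sqrt 2) * w 2 +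
    (2 * Real.sqrt 2 - 2) * w 4 + w 5)

/-- The linear form `c₇` of the paper, a coefficient of the second-order bias term. -/
def c7 (w : Fin 6 → ℝ) : ℝ :=
  2 * (2 * w 0 + (-6 + Real.sqrt 2) * w 1 + (4 - 2 * Real.sqrt 2) * w 2 +
    (2 - Real.sqrt 2) * w 3 + (-2 + 3 * Real.sqrt 2) * w 4 - Real.sqrt 2 * w 5)

/-- No choice of weights makes the boundary-length estimator asymptotically unbiased
with vanishing `a²`-bias: the linear system from Theorem 1 together with
`c₆(w) = c₇(w) = 0` is overdetermined and has no solution. -/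
theorem stmt_6 :
    ¬ ∃ w : Fin 6 → ℝ,
        w 0 = 0 ∧ w 5 = 0 ∧
        4 * ((2 - Real.sqrt 2) * w 1 + (-2 + 2 * Real.sqrt 2) * w 2 +
            (2 - Real.sqrt 2) * w 4) = Real.pi ∧
        w 1 - w 4 = 0 ∧
        (-5 + 2 * Real.sqrt 2) * w 1 + (4 - 4 * Real.sqrt 2) * w 2 +
            (3 - 2 * Real.sqrt 2) * w 3 + (-7 + 6 * Real.sqrt 2) * w 4 = 0 ∧
        c6 w = 0 ∧ c7 w = 0 := by
  rintro ⟨w, h0, h5, hpi, h14, heq5, hc6, hc7⟩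
  simp only [c6, c7] at hc6 hc7
  set s := Real.sqrt 2 with hsdef
  have hs : s * s = 2 := Real.mul_self_sqrt (by norm_num)
  have hsnn : (0:ℝ) ≤ s := Real.sqrt_nonneg 2
  have hslt : s < 2 := by nlinarith
  have hsgt : 1 < s := by nlinarith
  have key : (2 - s) * (w 3 - (4 * w 1 - 2 * w 2)) = 0 := by
    linear_combination hc7 / 2 + (-2 + 3 * s) * h14 - 2 * h0 + s * h5
  have h3 : w 3 = 4 * w 1 - 2 * w 2 := by
    have h2s : (2 : ℝ) - s ≠ 0 := by linarith
    have := mul_eq_zero.mp key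
    rcases this with h | h
    · exact absurd h h2s
    · linarith
  have hw2 : w 2 = 0 := by
    linear_combination (-1/2) * heq5 + (3/2 - s) * h3 + (7/2 - 3 * s) * h14
  have key1 : (4 * s - 4) * w 1 = 0 := by
    linear_combination 6 * hc6 - h0 - h5 - (2 - 4 * s) * hw2 + (2 * s - 2) * h14
  have hw1 : w 1 = 0 := by
    have h4s : (4:ℝ) * s - 4 ≠ 0 := by nlinarith
    rcases mul_eq_zero.mp key1 with h | h
    · exact absurd h h4s
    · exact h
  have hw4 : w 4 = 0 := by linarith
  have : Real.pi = 0 := by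
    rw [← hpi, hw1, hw2, hw4]; ring
  exact absurd this (ne_of_gt Real.pi_pos)

end
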